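/- arXiv:2007.01987 — 3 statements merged into one kernel-verified Lean document; each statement's English description precedes it below -/
import Mathlib

section
/- Fix β with 1 < β < 2. Then the following supremum is finite: sup over N ≥ e of ∫_0^N α^{5−4β} · [ min( (α²(1−α²/N²))^{−β/2} , α^{−2β} ) ] · ( ∫_0^1 min( α^β (s(1−s))^{−β/2} , s^{−β} ) ds )² dα < ∞. -/
open MeasureTheory

open Set


lemma min_le_interp {a b θ : ℝ} (ha : 0 ≤ a) (hb : 0 ≤ b) (h0 : 0 ≤ θ) (h1 : θ ≤ 1) :
    min a b ≤ a ^ θ * b ^ (1 - θ) := by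
  rcases le_total a b with h | h
  · rw [min_eq_left h]
    calc a = a ^ θ * a ^ (1 - θ) := by
            rw [← Real.rpow_add' ha (by norm_num), add_sub_cancel, Real.rpow_one]
      _ ≤ a ^ θ * b ^ (1 - θ) :=
            mul_le_mul_of_nonneg_left (Real.rpow_le_rpow ha h (by linarith))
              (Real.rpow_nonneg ha θ)
  · rw [min_eq_right h]
    calc b = b ^ θ * b ^ (1 - θ) := by
            rw [← Real.rpow_add' hb (by norm_num), add_sub_cancel, Real.rpow_one]
      _ ≤ a ^ θ * b ^ (1 - θ) :=
            mul_le_mul_of_nonneg_right (Real.rpow_le_rpow hb h h0)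
              (Real.rpow_nonneg hb _)

lemma rpow_le_two_of_half_le {x : ℝ} {t : ℝ} (ht : -1 ≤ t) (ht0 : t ≤ 0)
    (hhalf : (2:ℝ)⁻¹ ≤ x) : x ^ t ≤ 2 := by
  calc x ^ t ≤ ((2:ℝ)⁻¹) ^ t := Real.rpow_le_rpow_of_nonpos (by norm_num) hhalf ht0
    _ ≤ ((2:ℝ)⁻¹) ^ (-1 : ℝ) := Real.rpow_le_rpow_of_exponent_ge (by norm_num) (by norm_num) ht
    _ = 2 := by norm_num

/-- finiteness of the beta-type integral -/
lemma beta_lt_top {q r : ℝ} (hq : -1 < q) (hq0 : q ≤ 0) (hr : -1 < r) (hr0 : r ≤ 0) :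
    ∫⁻ s in Icc (0:ℝ) 1, ENNReal.ofReal (s ^ q * (1 - s) ^ r) < ⊤ := by
  have key :
      (∫⁻ s in Icc (0:ℝ) 1, ENNReal.ofReal (s ^ q * (1 - s) ^ r))
        ≤ (∫⁻ s in Icc (0:ℝ) 2⁻¹, ENNReal.ofReal (s ^ q) * ENNReal.ofReal 2)
          + (∫⁻ s in Icc (2⁻¹:ℝ) 1, ENNReal.ofReal ((1 - s) ^ r) * ENNReal.ofReal 2) := by
    calc (∫⁻ s in Icc (0:ℝ) 1, ENNReal.ofReal (s ^ q * (1 - s) ^ r))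
        ≤ ∫⁻ s in Icc (0:ℝ) 2⁻¹ ∪ Icc (2⁻¹:ℝ) 1, ENNReal.ofReal (s ^ q * (1 - s) ^ r) := by
          apply lintegral_mono_set
          intro x hx
          rcases le_total x 2⁻¹ with h | h
          · exact Or.inl ⟨hx.1, h⟩
          · exact Or.inr ⟨h, hx.2⟩
      _ ≤ (∫⁻ s in Icc (0:ℝ) 2⁻¹, ENNReal.ofReal (s ^ q * (1 - s) ^ r))
          + ∫⁻ s in Icc (2⁻¹:ℝ) 1, ENNReal.ofReal (s ^ q * (1 - s) ^ r) :=
          lintegral_union_le _ _ _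
      _ ≤ _ := by
          refine add_le_add (setLIntegral_mono' measurableSet_Icc fun s hs => ?_)
            (setLIntegral_mono' measurableSet_Icc fun s hs => ?_)
          · rw [ENNReal.ofReal_mul (Real.rpow_nonneg hs.1 q)]
            exact mul_le_mul_right (ENNReal.ofReal_le_ofReal
              (rpow_le_two_of_half_le hr.le hr0 (by linarith [hs.2]))) _
          · rw [mul_comm (s ^ q) ((1 - s) ^ r),
              ENNReal.ofReal_mul (Real.rpow_nonneg (by linarith [hs.2] : (0:ℝ) ≤ 1 - s) r)]
            exact mul_le_mul_right (ENNReal.ofReal_le_ofReal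
              (rpow_le_two_of_half_le hq.le hq0 hs.1)) _
  refine lt_of_le_of_lt key (ENNReal.add_lt_top.2 ⟨?_, ?_⟩)
  · rw [lintegral_mul_const' _ _ ENNReal.ofReal_ne_top]
    refine ENNReal.mul_lt_top ?_ ENNReal.ofReal_lt_top
    have hint : IntegrableOn (fun s : ℝ => s ^ q) (Icc (0:ℝ) 2⁻¹) :=
      (intervalIntegrable_iff_integrableOn_Icc_of_le (by norm_num)).1
        (intervalIntegral.intervalIntegrable_rpow' hq)
    exact hint.lintegral_lt_top
  · rw [lintegral_mul_const' _ _ ENNReal.ofReal_ne_top]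
    refine ENNReal.mul_lt_top ?_ ENNReal.ofReal_lt_top
    have hint : IntegrableOn (fun s : ℝ => (1 - s) ^ r) (Icc (2⁻¹:ℝ) 1) := by
      have h1 := (intervalIntegral.intervalIntegrable_rpow' hr (a := 0)
        (b := 2⁻¹)).comp_sub_left 1
      rw [sub_zero] at h1
      rw [show (1:ℝ) - 2⁻¹ = 2⁻¹ by norm_num] at h1
      exact (intervalIntegrable_iff_integrableOn_Icc_of_le (by norm_num)).1 h1.symm
    exact hint.lintegral_lt_top


/-- Lemma 6.6: for `1 < β < 2`, the integral
`∫_0^N α^(5-4β) [min((α²(1-α²/N²))^(-β/2), α^(-2β))]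
  (∫_0^1 min(α^β (s(1-s))^(-β/2), s^(-β)) ds)² dα`
is bounded uniformly over `N ≥ e`. -/
theorem Phi2_bound_beta_gt_one (β : ℝ) (hβ1 : 1 < β) (hβ2 : β < 2) :
    ∃ C : ℝ, ∀ N : ℝ, Real.exp 1 ≤ N →
      (∫⁻ α in Set.Icc (0 : ℝ) N,
          ENNReal.ofReal (α ^ (5 - 4 * β)) *
            ENNReal.ofReal (min ((α ^ 2 * (1 - α ^ 2 / N ^ 2)) ^ (-(β / 2))) (α ^ (-(2 * β)))) *
            (∫⁻ s in Set.Icc (0 : ℝ) 1,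
              ENNReal.ofReal (min (α ^ β * (s * (1 - s)) ^ (-(β / 2))) (s ^ (-β)))) ^ 2)
        ≤ ENNReal.ofReal C := by
  have hβ0 : (0:ℝ) < β := by linarith
  obtain ⟨p, hp1, hp2, hp3, hp4⟩ :
      ∃ p : ℝ, 2*β-2 < p ∧ p < 2 ∧ p < 3*β-3 ∧ p < β := by
    refine ⟨(2*β-2 + min 2 (min (3*β-3) β))/2, ?_, ?_, ?_, ?_⟩
    · have := lt_min (show 2*β-2 < 2 by linarith)
        (lt_min (show 2*β-2 < 3*β-3 by linarith) (show 2*β-2 < β by linarith))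
      linarith
    · have h1 := min_le_left 2 (min (3*β-3) β)
      linarith
    · have h1 := le_trans (min_le_right 2 (min (3*β-3) β)) (min_le_left (3*β-3) β)
      linarith
    · have h1 := le_trans (min_le_right 2 (min (3*β-3) β)) (min_le_right (3*β-3) β)
      linarith
  have hp0 : 0 < p := by linarith
  -- inner pointwise bound
  have inner_pt : ∀ α : ℝ, 0 ≤ α → ∀ s ∈ Icc (0:ℝ) 1,
      min (α ^ β * (s * (1 - s)) ^ (-(β / 2))) (s ^ (-β))
        ≤ α ^ p * (s ^ (p/2 - β) * (1 - s) ^ (-(p/2))) := by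
    intro α hα s hs
    obtain ⟨hs0, hs1⟩ := hs
    rcases eq_or_lt_of_le hs0 with h0 | h0
    · rw [← h0]
      refine le_trans (min_le_right _ _) ?_
      rw [Real.zero_rpow (neg_ne_zero.mpr hβ0.ne')]
      positivity
    · rcases eq_or_lt_of_le hs1 with h1 | h1
      · refine le_trans (min_le_left _ _) ?_
        rw [show s * (1 - s) = 0 by rw [h1]; ring,
          Real.zero_rpow (neg_ne_zero.mpr (by positivity : (0:ℝ) < β/2).ne'), mul_zero]
        exact mul_nonneg (Real.rpow_nonneg hα _)
          (mul_nonneg (Real.rpow_nonneg hs0 _) (Real.rpow_nonneg (by linarith) _))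
      · rcases eq_or_lt_of_le hα with hα0 | hα0
        · rw [← hα0, Real.zero_rpow hβ0.ne', Real.zero_rpow hp0.ne', zero_mul, zero_mul]
          exact min_le_left _ _
        · have hθ0 : 0 ≤ p/β := by positivity
          have hθ1 : p/β ≤ 1 := by rw [div_le_one hβ0]; linarith
          have hss : (0:ℝ) ≤ s * (1 - s) := by nlinarith
          have ha : 0 ≤ α ^ β * (s * (1 - s)) ^ (-(β/2)) := by positivity
          have hb : 0 ≤ s ^ (-β) := Real.rpow_nonneg h0.le _
          refine le_trans (min_le_interp ha hb hθ0 hθ1) (le_of_eq ?_)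
          rw [Real.mul_rpow (Real.rpow_nonneg hα _) (Real.rpow_nonneg hss _),
            ← Real.rpow_mul hα, ← Real.rpow_mul hss, ← Real.rpow_mul h0.le,
            Real.mul_rpow h0.le (by linarith : (0:ℝ) ≤ 1 - s),
            show β*(p/β) = p by field_simp,
            show -(β/2)*(p/β) = -(p/2) by field_simp,
            show -β*(1-p/β) = p - β by field_simp; ring,
            show p/2 - β = -(p/2) + (p - β) by ring,
            Real.rpow_add h0]
          ring
  have hq1 : (-1:ℝ) < p/2 - β := by linarith
  have hq0 : p/2 - β ≤ 0 := by linarith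
  have hr1 : (-1:ℝ) < -(p/2) := by linarith
  have hr0 : -(p/2) ≤ 0 := by linarith
  set J := ∫⁻ s in Icc (0:ℝ) 1, ENNReal.ofReal (s ^ (p/2-β) * (1-s) ^ (-(p/2))) with hJdef
  have hJ : J < ⊤ := beta_lt_top hq1 hq0 hr1 hr0
  have inner_bd : ∀ α : ℝ, 0 ≤ α →
      (∫⁻ s in Icc (0:ℝ) 1,
          ENNReal.ofReal (min (α ^ β * (s * (1 - s)) ^ (-(β / 2))) (s ^ (-β))))
        ≤ ENNReal.ofReal (α ^ p) * J := by
    intro α hα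
    calc (∫⁻ s in Icc (0:ℝ) 1,
          ENNReal.ofReal (min (α ^ β * (s * (1 - s)) ^ (-(β / 2))) (s ^ (-β))))
        ≤ ∫⁻ s in Icc (0:ℝ) 1,
          ENNReal.ofReal (α ^ p) * ENNReal.ofReal (s ^ (p/2-β) * (1-s) ^ (-(p/2))) := by
          refine setLIntegral_mono' measurableSet_Icc fun s hs => ?_
          rw [← ENNReal.ofReal_mul (Real.rpow_nonneg hα p)]
          exact ENNReal.ofReal_le_ofReal (inner_pt α hα s hs)
      _ = _ := lintegral_const_mul' _ _ ENNReal.ofReal_ne_top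
  -- bound on the min factor for small α
  have Mbd : ∀ N : ℝ, Real.exp 1 ≤ N → ∀ α : ℝ, 0 < α → α ≤ 1 →
      min ((α ^ 2 * (1 - α ^ 2 / N ^ 2)) ^ (-(β / 2))) (α ^ (-(2 * β))) ≤ 2 * α ^ (-β) := by
    intro N hN α h0 hα1
    have hN1 : (2:ℝ) ≤ N := by linarith [Real.add_one_le_exp (1:ℝ)]
    have hN0 : (0:ℝ) < N := by linarith
    have hfrac : α ^ 2 / N ^ 2 ≤ 2⁻¹ := by
      rw [div_le_iff₀ (by positivity)]
      nlinarith
    refine le_trans (min_le_left _ _) ?_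
    have hA : ((α:ℝ) ^ 2) ^ (-(β/2)) = α ^ (-β) := by
      rw [← Real.rpow_natCast α 2, ← Real.rpow_mul h0.le]
      norm_num
      congr 1
      ring
    calc (α ^ 2 * (1 - α ^ 2 / N ^ 2)) ^ (-(β / 2))
        ≤ (α ^ 2 * 2⁻¹) ^ (-(β / 2)) :=
          Real.rpow_le_rpow_of_nonpos (by positivity) (by nlinarith) (by linarith)
      _ = ((α:ℝ) ^ 2) ^ (-(β/2)) * ((2:ℝ)⁻¹) ^ (-(β/2)) :=
          Real.mul_rpow (by positivity) (by norm_num)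
      _ ≤ α ^ (-β) * 2 := by
          rw [hA]
          exact mul_le_mul_of_nonneg_left
            (rpow_le_two_of_half_le (by linarith) (by linarith) le_rfl)
            (Real.rpow_nonneg h0.le _)
      _ = 2 * α ^ (-β) := mul_comm _ _
  -- outer pointwise bound on [0,1]
  have outer1 : ∀ N : ℝ, Real.exp 1 ≤ N → ∀ α ∈ Icc (0:ℝ) 1,
      ENNReal.ofReal (α ^ (5 - 4 * β)) *
        ENNReal.ofReal (min ((α ^ 2 * (1 - α ^ 2 / N ^ 2)) ^ (-(β / 2))) (α ^ (-(2 * β)))) *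
        (∫⁻ s in Set.Icc (0 : ℝ) 1,
          ENNReal.ofReal (min (α ^ β * (s * (1 - s)) ^ (-(β / 2))) (s ^ (-β)))) ^ 2
      ≤ ENNReal.ofReal (2 * α ^ (5 - 5*β + 2*p)) * J ^ 2 := by
    intro N hN α hα
    obtain ⟨hα0, hα1⟩ := hα
    have hN1 : (2:ℝ) ≤ N := by linarith [Real.add_one_le_exp (1:ℝ)]
    have hbase : (0:ℝ) ≤ α ^ 2 * (1 - α ^ 2 / N ^ 2) := by
      have h2 : α ^ 2 / N ^ 2 ≤ 1 := by
        rw [div_le_one (by positivity)]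
        nlinarith
      nlinarith [sq_nonneg α]
    have hMnn : 0 ≤ min ((α ^ 2 * (1 - α ^ 2 / N ^ 2)) ^ (-(β / 2))) (α ^ (-(2 * β))) :=
      le_min (Real.rpow_nonneg hbase _) (Real.rpow_nonneg hα0 _)
    calc ENNReal.ofReal (α ^ (5 - 4 * β)) *
        ENNReal.ofReal (min ((α ^ 2 * (1 - α ^ 2 / N ^ 2)) ^ (-(β / 2))) (α ^ (-(2 * β)))) *
        (∫⁻ s in Set.Icc (0 : ℝ) 1,
          ENNReal.ofReal (min (α ^ β * (s * (1 - s)) ^ (-(β / 2))) (s ^ (-β)))) ^ 2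
        ≤ ENNReal.ofReal (α ^ (5 - 4 * β)) *
          ENNReal.ofReal (min ((α ^ 2 * (1 - α ^ 2 / N ^ 2)) ^ (-(β / 2))) (α ^ (-(2 * β)))) *
          (ENNReal.ofReal (α ^ p) * J) ^ 2 := by
          gcongr
          exact inner_bd α hα0
      _ = (ENNReal.ofReal (α ^ (5 - 4 * β)) *
          ENNReal.ofReal (min ((α ^ 2 * (1 - α ^ 2 / N ^ 2)) ^ (-(β / 2))) (α ^ (-(2 * β)))) *
          ENNReal.ofReal (α ^ p) ^ 2) * J ^ 2 := by ring
      _ ≤ ENNReal.ofReal (2 * α ^ (5 - 5*β + 2*p)) * J ^ 2 := by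
          refine mul_le_mul_left ?_ _
          rw [← ENNReal.ofReal_pow (Real.rpow_nonneg hα0 p),
              ← ENNReal.ofReal_mul (Real.rpow_nonneg hα0 _),
              ← ENNReal.ofReal_mul (mul_nonneg (Real.rpow_nonneg hα0 _) hMnn)]
          apply ENNReal.ofReal_le_ofReal
          rcases eq_or_lt_of_le hα0 with h0 | h0
          · rw [← h0]
            have hz : ((0:ℝ) ^ 2 * (1 - (0:ℝ) ^ 2 / N ^ 2)) = 0 := by norm_num
            rw [hz, Real.zero_rpow (neg_ne_zero.mpr (by positivity : (0:ℝ) < β/2).ne'),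
              Real.zero_rpow (neg_ne_zero.mpr (by positivity : (0:ℝ) < 2*β).ne'),
              min_self, mul_zero, zero_mul]
            positivity
          · have hM := Mbd N hN α h0 hα1
            have hcol : α ^ (5-4*β) * α ^ (-β) * (α ^ p * α ^ p) = α ^ (5 - 5*β + 2*p) := by
              rw [← Real.rpow_add h0, ← Real.rpow_add h0, ← Real.rpow_add h0]
              congr 1
              ring
            calc α ^ (5 - 4*β) *
                min ((α ^ 2 * (1 - α ^ 2 / N ^ 2)) ^ (-(β / 2))) (α ^ (-(2 * β))) * (α ^ p) ^ 2
                ≤ α ^ (5 - 4*β) * (2 * α ^ (-β)) * (α ^ p) ^ 2 := by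
                  gcongr
              _ = 2 * (α ^ (5-4*β) * α ^ (-β) * (α ^ p * α ^ p)) := by ring
              _ = 2 * α ^ (5 - 5*β + 2*p) := by rw [hcol]
  -- outer pointwise bound on (1,N]
  have outer2 : ∀ N : ℝ, Real.exp 1 ≤ N → ∀ α ∈ Ioc (1:ℝ) N,
      ENNReal.ofReal (α ^ (5 - 4 * β)) *
        ENNReal.ofReal (min ((α ^ 2 * (1 - α ^ 2 / N ^ 2)) ^ (-(β / 2))) (α ^ (-(2 * β)))) *
        (∫⁻ s in Set.Icc (0 : ℝ) 1,
          ENNReal.ofReal (min (α ^ β * (s * (1 - s)) ^ (-(β / 2))) (s ^ (-β)))) ^ 2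
      ≤ ENNReal.ofReal (α ^ (5 - 6*β + 2*p)) * J ^ 2 := by
    intro N hN α hα
    obtain ⟨hα1, hαN⟩ := hα
    have h0 : (0:ℝ) < α := by linarith
    have hbase : (0:ℝ) ≤ α ^ 2 * (1 - α ^ 2 / N ^ 2) := by
      have hN0 : (0:ℝ) < N := lt_of_lt_of_le (by positivity) (le_trans hαN le_rfl)
      have h2 : α ^ 2 / N ^ 2 ≤ 1 := by
        rw [div_le_one (by positivity)]
        nlinarith
      nlinarith [sq_nonneg α]
    have hMnn : 0 ≤ min ((α ^ 2 * (1 - α ^ 2 / N ^ 2)) ^ (-(β / 2))) (α ^ (-(2 * β))) :=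
      le_min (Real.rpow_nonneg hbase _) (Real.rpow_nonneg h0.le _)
    calc ENNReal.ofReal (α ^ (5 - 4 * β)) *
        ENNReal.ofReal (min ((α ^ 2 * (1 - α ^ 2 / N ^ 2)) ^ (-(β / 2))) (α ^ (-(2 * β)))) *
        (∫⁻ s in Set.Icc (0 : ℝ) 1,
          ENNReal.ofReal (min (α ^ β * (s * (1 - s)) ^ (-(β / 2))) (s ^ (-β)))) ^ 2
        ≤ ENNReal.ofReal (α ^ (5 - 4 * β)) *
          ENNReal.ofReal (min ((α ^ 2 * (1 - α ^ 2 / N ^ 2)) ^ (-(β / 2))) (α ^ (-(2 * β)))) *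
          (ENNReal.ofReal (α ^ p) * J) ^ 2 := by
          gcongr
          exact inner_bd α h0.le
      _ = (ENNReal.ofReal (α ^ (5 - 4 * β)) *
          ENNReal.ofReal (min ((α ^ 2 * (1 - α ^ 2 / N ^ 2)) ^ (-(β / 2))) (α ^ (-(2 * β)))) *
          ENNReal.ofReal (α ^ p) ^ 2) * J ^ 2 := by ring
      _ ≤ ENNReal.ofReal (α ^ (5 - 6*β + 2*p)) * J ^ 2 := by
          refine mul_le_mul_left ?_ _
          rw [← ENNReal.ofReal_pow (Real.rpow_nonneg h0.le p),
              ← ENNReal.ofReal_mul (Real.rpow_nonneg h0.le _),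
              ← ENNReal.ofReal_mul (mul_nonneg (Real.rpow_nonneg h0.le _) hMnn)]
          apply ENNReal.ofReal_le_ofReal
          have hcol : α ^ (5-4*β) * α ^ (-(2*β)) * (α ^ p * α ^ p) = α ^ (5 - 6*β + 2*p) := by
            rw [← Real.rpow_add h0, ← Real.rpow_add h0, ← Real.rpow_add h0]
            congr 1
            ring
          calc α ^ (5 - 4*β) *
              min ((α ^ 2 * (1 - α ^ 2 / N ^ 2)) ^ (-(β / 2))) (α ^ (-(2 * β))) * (α ^ p) ^ 2
              ≤ α ^ (5 - 4*β) * α ^ (-(2*β)) * (α ^ p) ^ 2 := by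
                gcongr
                exact min_le_right _ _
            _ = α ^ (5-4*β) * α ^ (-(2*β)) * (α ^ p * α ^ p) := by ring
            _ = α ^ (5 - 6*β + 2*p) := hcol
  -- the two finite master integrals
  set K1 := ∫⁻ α in Icc (0:ℝ) 1, ENNReal.ofReal (2 * α ^ (5 - 5*β + 2*p)) with hK1def
  set K2 := ∫⁻ α in Ioi (1:ℝ), ENNReal.ofReal (α ^ (5 - 6*β + 2*p)) with hK2def
  have hK1 : K1 < ⊤ := by
    have hint : IntegrableOn (fun α : ℝ => 2 * α ^ (5 - 5*β + 2*p)) (Icc (0:ℝ) 1) :=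
      (intervalIntegrable_iff_integrableOn_Icc_of_le zero_le_one).1
        ((intervalIntegral.intervalIntegrable_rpow' (by linarith)).const_mul 2)
    exact hint.lintegral_lt_top
  have hK2 : K2 < ⊤ :=
    (integrableOn_Ioi_rpow_of_lt (by linarith) zero_lt_one).lintegral_lt_top
  have hT : (K1 + K2) * J ^ 2 ≠ ⊤ :=
    ENNReal.mul_ne_top (ENNReal.add_ne_top.2 ⟨hK1.ne, hK2.ne⟩) (ENNReal.pow_ne_top hJ.ne)
  refine ⟨((K1 + K2) * J ^ 2).toReal, fun N hN => ?_⟩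
  rw [ENNReal.ofReal_toReal hT]
  calc (∫⁻ α in Set.Icc (0 : ℝ) N,
          ENNReal.ofReal (α ^ (5 - 4 * β)) *
            ENNReal.ofReal (min ((α ^ 2 * (1 - α ^ 2 / N ^ 2)) ^ (-(β / 2))) (α ^ (-(2 * β)))) *
            (∫⁻ s in Set.Icc (0 : ℝ) 1,
              ENNReal.ofReal (min (α ^ β * (s * (1 - s)) ^ (-(β / 2))) (s ^ (-β)))) ^ 2)
      ≤ ∫⁻ α in Icc (0:ℝ) 1 ∪ Ioc (1:ℝ) N,
          ENNReal.ofReal (α ^ (5 - 4 * β)) *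
            ENNReal.ofReal (min ((α ^ 2 * (1 - α ^ 2 / N ^ 2)) ^ (-(β / 2))) (α ^ (-(2 * β)))) *
            (∫⁻ s in Set.Icc (0 : ℝ) 1,
              ENNReal.ofReal (min (α ^ β * (s * (1 - s)) ^ (-(β / 2))) (s ^ (-β)))) ^ 2 := by
        apply lintegral_mono_set
        intro x hx
        rcases le_or_gt x 1 with h | h
        · exact Or.inl ⟨hx.1, h⟩
        · exact Or.inr ⟨h, hx.2⟩
    _ ≤ (∫⁻ α in Icc (0:ℝ) 1,
          ENNReal.ofReal (α ^ (5 - 4 * β)) *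
            ENNReal.ofReal (min ((α ^ 2 * (1 - α ^ 2 / N ^ 2)) ^ (-(β / 2))) (α ^ (-(2 * β)))) *
            (∫⁻ s in Set.Icc (0 : ℝ) 1,
              ENNReal.ofReal (min (α ^ β * (s * (1 - s)) ^ (-(β / 2))) (s ^ (-β)))) ^ 2)
        + (∫⁻ α in Ioc (1:ℝ) N,
          ENNReal.ofReal (α ^ (5 - 4 * β)) *
            ENNReal.ofReal (min ((α ^ 2 * (1 - α ^ 2 / N ^ 2)) ^ (-(β / 2))) (α ^ (-(2 * β)))) *
            (∫⁻ s in Set.Icc (0 : ℝ) 1,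
              ENNReal.ofReal (min (α ^ β * (s * (1 - s)) ^ (-(β / 2))) (s ^ (-β)))) ^ 2) :=
        lintegral_union_le _ _ _
    _ ≤ K1 * J ^ 2 + K2 * J ^ 2 := by
        refine add_le_add ?_ ?_
        · calc _ ≤ ∫⁻ α in Icc (0:ℝ) 1, ENNReal.ofReal (2 * α ^ (5 - 5*β + 2*p)) * J ^ 2 :=
              setLIntegral_mono' measurableSet_Icc (outer1 N hN)
            _ = K1 * J ^ 2 := lintegral_mul_const' _ _ (ENNReal.pow_ne_top hJ.ne)
        · calc _ ≤ ∫⁻ α in Ioc (1:ℝ) N, ENNReal.ofReal (α ^ (5 - 6*β + 2*p)) * J ^ 2 :=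
              setLIntegral_mono' measurableSet_Ioc (outer2 N hN)
            _ = (∫⁻ α in Ioc (1:ℝ) N, ENNReal.ofReal (α ^ (5 - 6*β + 2*p))) * J ^ 2 :=
              lintegral_mul_const' _ _ (ENNReal.pow_ne_top hJ.ne)
            _ ≤ K2 * J ^ 2 :=
              mul_le_mul_left (lintegral_mono_set fun x hx => hx.1) _
    _ = (K1 + K2) * J ^ 2 := (add_mul _ _ _).symm
end

section
/- There exists a constant C > 0 such that for all N ≥ e: ∫_0^N α · [ min( (α²(1−α²/N²))^{−1/2} , α^{−2} ) ] · ( ∫_0^1 min( α (s(1−s))^{−1/2} , s^{−1} ) ds )² dα ≤ C (log N)³. -/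
open MeasureTheory
open Set



lemma myMono {f g : ℝ → ENNReal} {s : Set ℝ} (hs : MeasurableSet s)
    (h : ∀ x ∈ s, f x ≤ g x) :
    ∫⁻ x in s, f x ≤ ∫⁻ x in s, g x :=
  lintegral_mono_ae ((ae_restrict_iff' hs).2 (Filter.Eventually.of_forall h))

lemma rpow_neg_half {x : ℝ} (hx : 0 ≤ x) : x ^ (-(1:ℝ)/2) = (Real.sqrt x)⁻¹ := by
  rw [Real.sqrt_eq_rpow, ← Real.rpow_neg hx]; norm_num

lemma int_rpow_half (t : ℝ) : ∫ s in (0:ℝ)..t, s ^ (-(1:ℝ)/2) = 2 * Real.sqrt t := by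
  rw [integral_rpow (Or.inl (by norm_num))]
  have h1 : -(1:ℝ)/2 + 1 = 1/2 := by norm_num
  rw [h1, Real.zero_rpow (by norm_num), Real.sqrt_eq_rpow]
  ring

-- key pointwise inequality
lemma key_ineq {s : ℝ} (hs : s ∈ Ioo (0:ℝ) 1) :
    (s * (1 - s)) ^ (-(1:ℝ)/2) ≤ s ^ (-(1:ℝ)/2) + (1 - s) ^ (-(1:ℝ)/2) := by
  obtain ⟨h0, h1⟩ := hs
  have h1' : 0 < 1 - s := by linarith
  rw [rpow_neg_half (by positivity), rpow_neg_half h0.le, rpow_neg_half h1'.le,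
    Real.sqrt_mul h0.le]
  set a := Real.sqrt s with ha
  set b := Real.sqrt (1 - s) with hb
  have ha0 : 0 < a := Real.sqrt_pos.2 h0
  have hb0 : 0 < b := Real.sqrt_pos.2 h1'
  have ha2 : a ^ 2 = s := Real.sq_sqrt h0.le
  have hb2 : b ^ 2 = 1 - s := Real.sq_sqrt h1'.le
  have ha1 : a ≤ 1 := Real.sqrt_le_one.2 (by linarith)
  have hb1 : b ≤ 1 := Real.sqrt_le_one.2 (by linarith)
  have hab : 1 ≤ a + b := by nlinarith
  rw [inv_eq_one_div, inv_eq_one_div, inv_eq_one_div,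
    div_add_div _ _ (ne_of_gt ha0) (ne_of_gt hb0), div_le_div_iff₀ (by positivity) (by positivity)]
  nlinarith [mul_pos ha0 hb0]

lemma rpow_neg_two {x : ℝ} (h : 0 ≤ x) : x ^ (-(2:ℝ)) = (x^2)⁻¹ := by
  rw [← Real.rpow_natCast x 2, ← Real.rpow_neg h]; norm_num



lemma innerA (α : ℝ) (hα : 0 ≤ α) :
    (∫⁻ s in Icc (0:ℝ) 1,
      ENNReal.ofReal (min (α * (s * (1 - s)) ^ (-(1:ℝ)/2)) (s ^ (-(1:ℝ)))))
      ≤ ENNReal.ofReal (4 * α) := by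
  rw [setLIntegral_congr (Ioo_ae_eq_Icc (a := (0:ℝ)) (b := 1)).symm]
  have hint : IntervalIntegrable (fun s : ℝ => α * (s ^ (-(1:ℝ)/2) + (1 - s) ^ (-(1:ℝ)/2)))
      volume 0 1 := by
    refine ((intervalIntegral.intervalIntegrable_rpow' (by norm_num)).add ?_).const_mul α
    have := (intervalIntegral.intervalIntegrable_rpow'
      (a := 0) (b := 1) (r := -(1:ℝ)/2) (by norm_num)).comp_sub_left 1
    simpa using this.symm
  calc ∫⁻ s in Ioo (0:ℝ) 1,
        ENNReal.ofReal (min (α * (s * (1 - s)) ^ (-(1:ℝ)/2)) (s ^ (-(1:ℝ))))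
      ≤ ∫⁻ s in Ioo (0:ℝ) 1,
        ENNReal.ofReal (α * (s ^ (-(1:ℝ)/2) + (1 - s) ^ (-(1:ℝ)/2))) := by
        refine myMono measurableSet_Ioo fun s hs => ENNReal.ofReal_le_ofReal ?_
        exact le_trans (min_le_left _ _)
          (mul_le_mul_of_nonneg_left (key_ineq hs) hα)
    _ = ENNReal.ofReal (∫ s in Ioo (0:ℝ) 1,
          α * (s ^ (-(1:ℝ)/2) + (1 - s) ^ (-(1:ℝ)/2))) := by
        refine (ofReal_integral_eq_lintegral_ofReal ?_ ?_).symm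
        · exact (intervalIntegrable_iff_integrableOn_Ioo_of_le zero_le_one).1 hint
        · refine (ae_restrict_iff' measurableSet_Ioo).2 (Filter.Eventually.of_forall
            fun s hs => ?_)
          have h0 : (0:ℝ) < s := hs.1
          have h1 : (0:ℝ) < 1 - s := by linarith [hs.2]
          positivity
    _ ≤ ENNReal.ofReal (4 * α) := by
        refine ENNReal.ofReal_le_ofReal (le_of_eq ?_)
        rw [← integral_Ioc_eq_integral_Ioo, ← intervalIntegral.integral_of_le zero_le_one,
          intervalIntegral.integral_const_mul,
          intervalIntegral.integral_add (intervalIntegral.intervalIntegrable_rpow' (by norm_num))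
            (by simpa using ((intervalIntegral.intervalIntegrable_rpow'
              (a := 0) (b := 1) (r := -(1:ℝ)/2) (by norm_num)).comp_sub_left 1).symm)]
        have h2 : ∫ s in (0:ℝ)..1, (1 - s) ^ (-(1:ℝ)/2) = 2 := by
          rw [intervalIntegral.integral_comp_sub_left (fun x : ℝ => x ^ (-(1:ℝ)/2)) 1]
          simp [int_rpow_half]
        rw [int_rpow_half, h2]
        simp [Real.sqrt_one]; ring


lemma innerB (α : ℝ) (hα : 2 ≤ α) :
    (∫⁻ s in Icc (0:ℝ) 1,
      ENNReal.ofReal (min (α * (s * (1 - s)) ^ (-(1:ℝ)/2)) (s ^ (-(1:ℝ)))))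
      ≤ ENNReal.ofReal (4 + 2 * Real.log α) := by
  have hα0 : (0:ℝ) < α := by linarith
  set t : ℝ := (α ^ 2)⁻¹ with htdef
  have ht0 : 0 < t := by positivity
  have ht4 : t ≤ 1/4 := by
    rw [htdef]
    rw [inv_le_comm₀ (by positivity) (by norm_num)]
    nlinarith
  have ht1 : t ≤ 1 := by linarith
  rw [← Icc_union_Ioc_eq_Icc ht0.le ht1,
    lintegral_union measurableSet_Ioc ((Iic_disjoint_Ioc le_rfl).mono Icc_subset_Iic_self le_rfl)]
  have piece1 : (∫⁻ s in Icc (0:ℝ) t,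
      ENNReal.ofReal (min (α * (s * (1 - s)) ^ (-(1:ℝ)/2)) (s ^ (-(1:ℝ)))))
      ≤ ENNReal.ofReal 4 := by
    calc ∫⁻ s in Icc (0:ℝ) t,
          ENNReal.ofReal (min (α * (s * (1 - s)) ^ (-(1:ℝ)/2)) (s ^ (-(1:ℝ))))
        ≤ ∫⁻ s in Icc (0:ℝ) t, ENNReal.ofReal (2 * α * s ^ (-(1:ℝ)/2)) := by
          refine myMono measurableSet_Icc fun s hs => ENNReal.ofReal_le_ofReal ?_
          refine le_trans (min_le_left _ _) ?_
          rcases eq_or_lt_of_le hs.1 with h | h0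
          · simp [← h, Real.zero_rpow (show (-(1:ℝ)/2) ≠ 0 by norm_num)]
          have hs1 : s ≤ 1/4 := le_trans hs.2 ht4
          have h1s : (0:ℝ) < 1 - s := by linarith
          have hhalf : (1/2 : ℝ) ≤ Real.sqrt (1 - s) :=
            (Real.le_sqrt (by norm_num) h1s.le).2 (by nlinarith)
          have hinv : (Real.sqrt (1 - s))⁻¹ ≤ 2 := by
            rw [inv_le_comm₀ (by positivity) (by norm_num)]; linarith
          rw [rpow_neg_half (by positivity), rpow_neg_half h0.le, Real.sqrt_mul h0.le,
            mul_inv]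
          have hs0 : 0 ≤ (Real.sqrt s)⁻¹ := by positivity
          calc α * ((Real.sqrt s)⁻¹ * (Real.sqrt (1 - s))⁻¹)
              ≤ α * ((Real.sqrt s)⁻¹ * 2) := by
                refine mul_le_mul_of_nonneg_left (mul_le_mul_of_nonneg_left hinv hs0) hα0.le
            _ = 2 * α * (Real.sqrt s)⁻¹ := by ring
      _ = ENNReal.ofReal (∫ s in Icc (0:ℝ) t, 2 * α * s ^ (-(1:ℝ)/2)) := by
          refine (ofReal_integral_eq_lintegral_ofReal ?_ ?_).symm
          · rw [← restrict_Ioc_eq_restrict_Icc]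
            exact (intervalIntegrable_iff_integrableOn_Ioc_of_le ht0.le).1
              ((intervalIntegral.intervalIntegrable_rpow' (by norm_num)).const_mul _)
          · refine (ae_restrict_iff' measurableSet_Icc).2 (Filter.Eventually.of_forall
              fun s hs => ?_)
            have h0 : (0:ℝ) ≤ s := hs.1
            positivity
      _ = ENNReal.ofReal 4 := by
          congr 1
          rw [← restrict_Ioc_eq_restrict_Icc, ← intervalIntegral.integral_of_le ht0.le,
            intervalIntegral.integral_const_mul, int_rpow_half]
          rw [htdef, Real.sqrt_inv, Real.sqrt_sq hα0.le]
          field_simp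
          ring
  have piece2 : (∫⁻ s in Ioc t 1,
      ENNReal.ofReal (min (α * (s * (1 - s)) ^ (-(1:ℝ)/2)) (s ^ (-(1:ℝ)))))
      ≤ ENNReal.ofReal (2 * Real.log α) := by
    have hinv : IntervalIntegrable (fun s : ℝ => s⁻¹) volume t 1 := by
      refine ContinuousOn.intervalIntegrable (ContinuousOn.inv₀ continuousOn_id fun x hx => ?_)
      rw [uIcc_of_le ht1] at hx
      exact ne_of_gt (lt_of_lt_of_le ht0 hx.1)
    calc ∫⁻ s in Ioc t 1,
          ENNReal.ofReal (min (α * (s * (1 - s)) ^ (-(1:ℝ)/2)) (s ^ (-(1:ℝ))))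
        ≤ ∫⁻ s in Ioc t 1, ENNReal.ofReal s⁻¹ := by
          refine myMono measurableSet_Ioc fun s hs => ENNReal.ofReal_le_ofReal ?_
          refine le_trans (min_le_right _ _) (le_of_eq ?_)
          rw [show (-(1:ℝ)) = ((-1 : ℤ) : ℝ) by norm_num, Real.rpow_intCast, zpow_neg_one]
      _ = ENNReal.ofReal (∫ s in Ioc t 1, s⁻¹) := by
          refine (ofReal_integral_eq_lintegral_ofReal ?_ ?_).symm
          · exact (intervalIntegrable_iff_integrableOn_Ioc_of_le ht1).1 hinv
          · refine (ae_restrict_iff' measurableSet_Ioc).2 (Filter.Eventually.of_forall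
              fun s hs => ?_)
            have h0 : (0:ℝ) < s := lt_of_le_of_lt ht0.le hs.1
            positivity
      _ ≤ ENNReal.ofReal (2 * Real.log α) := by
          refine ENNReal.ofReal_le_ofReal (le_of_eq ?_)
          rw [← intervalIntegral.integral_of_le ht1, integral_inv (by
            rw [uIcc_of_le ht1]; intro hx; exact absurd hx.1 (not_le.2 ht0))]
          rw [htdef, one_div, inv_inv, Real.log_pow]
          push_cast; ring
  calc _ ≤ ENNReal.ofReal 4 + ENNReal.ofReal (2 * Real.log α) := add_le_add piece1 piece2
    _ = ENNReal.ofReal (4 + 2 * Real.log α) := by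
        rw [← ENNReal.ofReal_add (by norm_num)
          (mul_nonneg (by norm_num) (Real.log_nonneg (by linarith)))]


lemma log_sq_integrable {N : ℝ} (hN : 2 ≤ N) :
    IntervalIntegrable (fun x : ℝ => Real.log x ^ 2 * x⁻¹) volume 2 N := by
  refine ContinuousOn.intervalIntegrable ?_
  rw [uIcc_of_le hN]
  have hlog : ContinuousOn Real.log (Icc (2:ℝ) N) :=
    Real.continuousOn_log.mono fun x hx => by
      simp only [mem_compl_iff, mem_singleton_iff]
      intro h; rw [h] at hx; linarith [hx.1]
  exact ((hlog.pow 2).mul (continuousOn_id.inv₀ fun x hx => by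
    have : (2:ℝ) ≤ x := hx.1; intro h; simp only [id] at h; linarith))

lemma ftc_log (N : ℝ) (hN : 2 ≤ N) :
    ∫ x in (2:ℝ)..N, Real.log x ^ 2 * x⁻¹
      = Real.log N ^ 3 / 3 - Real.log 2 ^ 3 / 3 := by
  refine intervalIntegral.integral_eq_sub_of_hasDerivAt (f := fun x => Real.log x ^ 3 / 3)
    (fun x hx => ?_) (log_sq_integrable hN)
  rw [uIcc_of_le hN] at hx
  have hx0 : x ≠ 0 := by intro h; rw [h] at hx; linarith [hx.1]
  have := ((Real.hasDerivAt_log hx0).pow 3).div_const 3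
  convert this using 1
  · rfl
  · rfl
  · rw [show (3:ℕ) - 1 = 2 from rfl]; push_cast; ring


/-- Lemma 6.7 (β = 1): there is `C > 0` so that for all `N ≥ e`,
`∫_0^N α [min((α²(1-α²/N²))^{-1/2}, α^{-2})]
  (∫_0^1 min(α (s(1-s))^{-1/2}, s^{-1}) ds)² dα ≤ C (log N)³`. -/
theorem Phi2_bound_beta_eq_one :
    ∃ C : ℝ, 0 < C ∧ ∀ N : ℝ, Real.exp 1 ≤ N →
      (∫⁻ α in Set.Icc (0 : ℝ) N,
          ENNReal.ofReal α *
            ENNReal.ofReal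
              (min ((α ^ 2 * (1 - α ^ 2 / N ^ 2)) ^ (-(1 : ℝ) / 2)) (α ^ (-(2 : ℝ)))) *
            (∫⁻ s in Set.Icc (0 : ℝ) 1,
              ENNReal.ofReal
                (min (α * (s * (1 - s)) ^ (-(1 : ℝ) / 2)) (s ^ (-(1 : ℝ))))) ^ 2)
        ≤ ENNReal.ofReal (C * Real.log N ^ 3) := by
  refine ⟨100, by norm_num, fun N hN => ?_⟩
  have hN2 : (2:ℝ) ≤ N := le_trans (by linarith [Real.exp_one_gt_d9]) hN
  have hN0 : (0:ℝ) < N := by linarith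
  have hlogN : 1 ≤ Real.log N := by
    rw [← Real.log_exp 1]
    exact Real.log_le_log (Real.exp_pos 1) hN
  have hlog2 : (0.6931471803 : ℝ) < Real.log 2 := Real.log_two_gt_d9
  set F : ℝ → ENNReal := fun α =>
    ENNReal.ofReal α *
      ENNReal.ofReal
        (min ((α ^ 2 * (1 - α ^ 2 / N ^ 2)) ^ (-(1 : ℝ) / 2)) (α ^ (-(2 : ℝ)))) *
      (∫⁻ s in Set.Icc (0 : ℝ) 1,
        ENNReal.ofReal
          (min (α * (s * (1 - s)) ^ (-(1 : ℝ) / 2)) (s ^ (-(1 : ℝ))))) ^ 2 with hF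
  show ∫⁻ α in Icc (0:ℝ) N, F α ≤ _
  rw [← Icc_union_Ioc_eq_Icc (by norm_num : (0:ℝ) ≤ 2) hN2,
    lintegral_union measurableSet_Ioc ((Iic_disjoint_Ioc le_rfl).mono Icc_subset_Iic_self le_rfl)]
  -- generic bound : F α ≤ ofReal α * ofReal ((α^2)⁻¹) * (inner bound)^2
  have hFle : ∀ α : ℝ, 0 < α → ∀ g : ℝ, 0 ≤ g →
      (∫⁻ s in Icc (0:ℝ) 1,
        ENNReal.ofReal (min (α * (s * (1 - s)) ^ (-(1:ℝ)/2)) (s ^ (-(1:ℝ)))))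
        ≤ ENNReal.ofReal g →
      F α ≤ ENNReal.ofReal (α * (α^2)⁻¹ * g^2) := by
    intro α hα0 g hg hinner
    rw [hF]
    calc ENNReal.ofReal α *
          ENNReal.ofReal
            (min ((α ^ 2 * (1 - α ^ 2 / N ^ 2)) ^ (-(1 : ℝ) / 2)) (α ^ (-(2 : ℝ)))) *
          (∫⁻ s in Set.Icc (0 : ℝ) 1,
            ENNReal.ofReal
              (min (α * (s * (1 - s)) ^ (-(1 : ℝ) / 2)) (s ^ (-(1 : ℝ))))) ^ 2
        ≤ ENNReal.ofReal α * ENNReal.ofReal (α ^ (-(2:ℝ))) * (ENNReal.ofReal g) ^ 2 := by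
          exact mul_le_mul' (mul_le_mul' le_rfl
            (ENNReal.ofReal_le_ofReal (min_le_right _ _)))
            (pow_le_pow_left₀ (zero_le ..) hinner 2)
      _ = ENNReal.ofReal (α * (α^2)⁻¹ * g^2) := by
          rw [rpow_neg_two hα0.le, ← ENNReal.ofReal_pow hg, ← ENNReal.ofReal_mul hα0.le,
            ← ENNReal.ofReal_mul (by positivity)]
  have partA : ∫⁻ α in Icc (0:ℝ) 2, F α ≤ ENNReal.ofReal 64 := by
    calc ∫⁻ α in Icc (0:ℝ) 2, F α ≤ ∫⁻ _ in Icc (0:ℝ) 2, ENNReal.ofReal 32 := by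
          refine myMono measurableSet_Icc fun α hα => ?_
          rcases eq_or_lt_of_le hα.1 with h | h0
          · rw [hF, ← h]; simp
          refine le_trans (hFle α h0 (4*α) (by positivity) (innerA α h0.le)) ?_
          refine ENNReal.ofReal_le_ofReal ?_
          have h2 : α ≤ 2 := hα.2
          have : α * (α^2)⁻¹ * (4*α)^2 = 16 * α := by field_simp; ring
          rw [this]; linarith
      _ ≤ ENNReal.ofReal 64 := by
          rw [setLIntegral_const, Real.volume_Icc, ← ENNReal.ofReal_mul (by norm_num)]
          norm_num
  have partB : ∫⁻ α in Ioc (2:ℝ) N, F α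
      ≤ ENNReal.ofReal (64 * (Real.log N ^ 3 / 3 - Real.log 2 ^ 3 / 3)) := by
    calc ∫⁻ α in Ioc (2:ℝ) N, F α
        ≤ ∫⁻ α in Ioc (2:ℝ) N, ENNReal.ofReal (64 * (Real.log α ^ 2 * α⁻¹)) := by
          refine myMono measurableSet_Ioc fun α hα => ?_
          have h2 : (2:ℝ) ≤ α := hα.1.le
          have h0 : (0:ℝ) < α := by linarith
          have hL : (0.6931471803 : ℝ) < Real.log α :=
            lt_of_lt_of_le hlog2 (Real.log_le_log (by norm_num) h2)
          refine le_trans (hFle α h0 (4 + 2 * Real.log α)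
            (by positivity) (innerB α h2)) ?_
          refine ENNReal.ofReal_le_ofReal ?_
          have key : (4 + 2 * Real.log α)^2 ≤ 64 * Real.log α ^ 2 := by nlinarith
          have e1 : α * (α^2)⁻¹ * (4 + 2*Real.log α)^2
              = (4 + 2*Real.log α)^2 * α⁻¹ := by field_simp
          rw [e1]
          calc (4 + 2*Real.log α)^2 * α⁻¹ ≤ 64 * Real.log α ^ 2 * α⁻¹ := by
                exact mul_le_mul_of_nonneg_right key (by positivity)
            _ = 64 * (Real.log α ^ 2 * α⁻¹) := by ring
      _ = ENNReal.ofReal (∫ α in Ioc (2:ℝ) N, 64 * (Real.log α ^ 2 * α⁻¹)) := by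
          refine (ofReal_integral_eq_lintegral_ofReal ?_ ?_).symm
          · exact (intervalIntegrable_iff_integrableOn_Ioc_of_le hN2).1
              ((log_sq_integrable hN2).const_mul 64)
          · refine (ae_restrict_iff' measurableSet_Ioc).2 (Filter.Eventually.of_forall
              fun α hα => ?_)
            have h0 : (0:ℝ) < α := by linarith [hα.1]
            have hL : 0 ≤ Real.log α := Real.log_nonneg (by linarith [hα.1])
            positivity
      _ ≤ _ := by
          refine ENNReal.ofReal_le_ofReal (le_of_eq ?_)
          rw [← intervalIntegral.integral_of_le hN2, intervalIntegral.integral_const_mul,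
            ftc_log N hN2]
  calc _ ≤ ENNReal.ofReal 64 + ENNReal.ofReal (64 * (Real.log N ^ 3 / 3 - Real.log 2 ^ 3 / 3)) :=
        add_le_add partA partB
    _ ≤ ENNReal.ofReal (100 * Real.log N ^ 3) := by
        have hl2u : Real.log 2 < 0.6931471808 := Real.log_two_lt_d9
        have hl2l : (0:ℝ) ≤ Real.log 2 := by linarith
        have h3 : 1 ≤ Real.log N ^ 3 := one_le_pow₀ hlogN
        have hc : Real.log 2 ^ 3 ≤ 1 := pow_le_one₀ hl2l (by linarith)
        have hc0 : 0 ≤ Real.log 2 ^ 3 := by positivity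
        rw [← ENNReal.ofReal_add (by norm_num) (by linarith)]
        refine ENNReal.ofReal_le_ofReal ?_
        linarith
end

section
/- The triple integral ∫_{ℝ³} (1 ∧ |x|^{−1}) (1 ∧ |y|^{−1}) (1 ∧ |x−z|^{−1}) (1 ∧ |y−z|^{−1}) dx dy dz is finite. -/
open MeasureTheory
open scoped ENNReal NNReal

/-! Auxiliary development for `triple_integral_finite`. -/

noncomputable def gk (u : ℝ) : ℝ≥0∞ := ENNReal.ofReal (min 1 |u|⁻¹)

lemma gk_meas : Measurable gk :=
  ENNReal.measurable_ofReal.comp (measurable_const.min (continuous_abs.measurable.inv))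

lemma gk_le_one (u : ℝ) : gk u ≤ 1 := by
  refine (ENNReal.ofReal_le_ofReal (min_le_left _ _)).trans ?_
  simp

lemma gk_ne_top (u : ℝ) : gk u ≠ ⊤ := ((gk_le_one u).trans_lt ENNReal.one_lt_top).ne

lemma gk_neg (u : ℝ) : gk (-u) = gk u := by simp [gk]

lemma lintegral_shift (f : ℝ → ℝ≥0∞) (a : ℝ) : ∫⁻ x, f (x + a) = ∫⁻ x, f x :=
  lintegral_add_right_eq_self f a

lemma lintegral_neg_arg (f : ℝ → ℝ≥0∞) : ∫⁻ x, f (-x) = ∫⁻ x, f x := by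
  calc ∫⁻ x, f (-x)
      = ∫⁻ x, f x ∂(Measure.map (MeasurableEquiv.neg ℝ) (volume : Measure ℝ)) :=
        (lintegral_map_equiv f (MeasurableEquiv.neg ℝ)).symm
    _ = ∫⁻ x, f x := by
        congr 1
        exact Measure.map_neg_eq_self (volume : Measure ℝ)

lemma lintegral_sub_arg (f : ℝ → ℝ≥0∞) (w : ℝ) : ∫⁻ z, f (w - z) = ∫⁻ z, f z := by
  have h1 : ∫⁻ z, f (w - (-z)) = ∫⁻ z, f (w - z) := lintegral_neg_arg (fun z => f (w - z))
  have h2 : ∫⁻ z, f (w + z) = ∫⁻ z, f z := by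
    simpa [add_comm] using lintegral_shift f w
  simp only [sub_neg_eq_add] at h1
  rw [← h1, h2]

noncomputable def Aint : ℝ≥0∞ := ∫⁻ t : ℝ, gk t ^ (4/3 : ℝ)

lemma min_le_japanese (t : ℝ) : min 1 |t|⁻¹ ≤ 2 * (1 + |t|)⁻¹ := by
  rcases le_total |t| 1 with h | h
  · refine (min_le_left _ _).trans ?_
    rw [le_mul_inv_iff₀ (by positivity)]
    linarith
  · refine (min_le_right _ _).trans ?_
    have h0 : (0:ℝ) < |t| := lt_of_lt_of_le one_pos h
    rw [inv_le_iff_one_le_mul₀ (by positivity)]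
    rw [show 2 * (1 + |t|)⁻¹ * |t| = (2 * |t|) / (1 + |t|) by ring,
      le_div_iff₀ (by positivity)]
    linarith

lemma gk_rpow_le (t : ℝ) :
    gk t ^ (4/3 : ℝ) ≤
      ENNReal.ofReal ((2:ℝ) ^ (4/3 : ℝ)) * ENNReal.ofReal ((1 + ‖t‖) ^ (-(4/3) : ℝ)) := by
  have h1 : gk t ≤ ENNReal.ofReal (2 * (1 + |t|)⁻¹) :=
    ENNReal.ofReal_le_ofReal (min_le_japanese t)
  have h2 : gk t ^ (4/3 : ℝ) ≤ ENNReal.ofReal (2 * (1 + |t|)⁻¹) ^ (4/3 : ℝ) :=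
    ENNReal.rpow_le_rpow h1 (by norm_num)
  refine h2.trans_eq ?_
  rw [ENNReal.ofReal_rpow_of_nonneg (by positivity) (by norm_num),
    Real.mul_rpow (by norm_num) (by positivity),
    ENNReal.ofReal_mul (by positivity)]
  congr 1
  rw [Real.norm_eq_abs, Real.rpow_neg (by positivity), ← Real.inv_rpow (by positivity)]

lemma Aint_lt_top : Aint < ⊤ := by
  have hb : Aint ≤ ENNReal.ofReal ((2:ℝ) ^ (4/3 : ℝ)) *
      ∫⁻ t : ℝ, ENNReal.ofReal ((1 + ‖t‖) ^ (-(4/3) : ℝ)) := by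
    rw [← lintegral_const_mul' _ _ ENNReal.ofReal_ne_top]
    exact lintegral_mono gk_rpow_le
  refine hb.trans_lt (ENNReal.mul_lt_top ENNReal.ofReal_lt_top ?_)
  have : ((Module.finrank ℝ ℝ : ℝ)) < (4/3 : ℝ) := by
    simp [Module.finrank_self]; norm_num
  exact finite_integral_one_add_norm this

lemma Aint_ne_top : Aint ≠ ⊤ := Aint_lt_top.ne

/-- Hölder with `p = q = 2`. -/
lemma holder2 {f g : ℝ → ℝ≥0∞} (hf : Measurable f) (hg : Measurable g) :
    ∫⁻ x, f x * g x ≤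
      (∫⁻ x, f x ^ (2:ℝ)) ^ (1/2 : ℝ) * (∫⁻ x, g x ^ (2:ℝ)) ^ (1/2 : ℝ) := by
  have hconj : Real.HolderConjugate 2 2 := Real.HolderConjugate.two_two
  simpa using
    ENNReal.lintegral_mul_le_Lp_mul_Lq volume hconj hf.aemeasurable hg.aemeasurable

lemma gk_shift_rpow (w : ℝ) : ∫⁻ z : ℝ, gk (w - z) ^ (4/3 : ℝ) = Aint :=
  lintegral_sub_arg (fun t => gk t ^ (4/3 : ℝ)) w

noncomputable def Hc (w : ℝ) : ℝ≥0∞ := ∫⁻ z : ℝ, gk z * gk (w - z)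

noncomputable def Kc (w : ℝ) : ℝ≥0∞ := ∫⁻ z : ℝ, (gk z * gk (w - z)) ^ (4/3 : ℝ)

lemma F_meas (w : ℝ) : Measurable fun z : ℝ => gk z * gk (w - z) :=
  gk_meas.mul (gk_meas.comp (measurable_const.sub measurable_id))

lemma Kc_le (w : ℝ) : Kc w ≤ Aint := by
  refine lintegral_mono fun z => ?_
  refine ENNReal.rpow_le_rpow ?_ (by norm_num)
  exact mul_le_of_le_one_right' (gk_le_one _)

lemma Hc_le (w : ℝ) : Hc w ≤ Kc w ^ (1/2 : ℝ) * Aint ^ (1/2 : ℝ) := by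
  set F : ℝ → ℝ≥0∞ := fun z => gk z * gk (w - z) with hF
  have mF : Measurable F := F_meas w
  have mrpow : ∀ c : ℝ, Measurable fun z => F z ^ c := fun c =>
    (ENNReal.continuous_rpow_const.measurable).comp mF
  have h23 : ∫⁻ z, F z ^ (2/3 : ℝ) ≤ Aint := by
    have e1 : ∀ z, F z ^ (2/3 : ℝ) = gk z ^ (2/3 : ℝ) * gk (w - z) ^ (2/3 : ℝ) := fun z =>
      ENNReal.mul_rpow_of_nonneg _ _ (by norm_num)
    calc ∫⁻ z, F z ^ (2/3 : ℝ)
        = ∫⁻ z, gk z ^ (2/3 : ℝ) * gk (w - z) ^ (2/3 : ℝ) := lintegral_congr e1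
      _ ≤ (∫⁻ z, (gk z ^ (2/3 : ℝ)) ^ (2:ℝ)) ^ (1/2 : ℝ) *
            (∫⁻ z, (gk (w - z) ^ (2/3 : ℝ)) ^ (2:ℝ)) ^ (1/2 : ℝ) :=
          holder2 (ENNReal.continuous_rpow_const.measurable.comp gk_meas)
            (ENNReal.continuous_rpow_const.measurable.comp
              (gk_meas.comp (measurable_const.sub measurable_id)))
      _ = Aint ^ (1/2 : ℝ) * Aint ^ (1/2 : ℝ) := by
          simp only [← ENNReal.rpow_mul]
          norm_num
          rw [gk_shift_rpow]
          rfl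
      _ = Aint := by
          rw [← ENNReal.rpow_add_of_nonneg _ _ (by norm_num) (by norm_num)]
          norm_num
  have hsplit : ∀ z, F z = F z ^ (2/3 : ℝ) * F z ^ (1/3 : ℝ) := fun z => by
    rw [← ENNReal.rpow_add_of_nonneg _ _ (by norm_num) (by norm_num)]
    norm_num
  calc Hc w = ∫⁻ z, F z ^ (2/3 : ℝ) * F z ^ (1/3 : ℝ) := lintegral_congr hsplit
    _ ≤ (∫⁻ z, (F z ^ (2/3 : ℝ)) ^ (2:ℝ)) ^ (1/2 : ℝ) *
          (∫⁻ z, (F z ^ (1/3 : ℝ)) ^ (2:ℝ)) ^ (1/2 : ℝ) :=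
        holder2 (mrpow _) (mrpow _)
    _ = (Kc w) ^ (1/2 : ℝ) * (∫⁻ z, F z ^ (2/3 : ℝ)) ^ (1/2 : ℝ) := by
        simp only [← ENNReal.rpow_mul]
        norm_num
        rfl
    _ ≤ Kc w ^ (1/2 : ℝ) * Aint ^ (1/2 : ℝ) :=
        mul_le_mul_right (ENNReal.rpow_le_rpow h23 (by norm_num)) _

lemma Hc_sq_le (w : ℝ) : Hc w * Hc w ≤ Kc w * Aint := by
  calc Hc w * Hc w
      ≤ (Kc w ^ (1/2 : ℝ) * Aint ^ (1/2 : ℝ)) * (Kc w ^ (1/2 : ℝ) * Aint ^ (1/2 : ℝ)) :=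
        mul_le_mul' (Hc_le w) (Hc_le w)
    _ = (Kc w ^ (1/2 : ℝ) * Kc w ^ (1/2 : ℝ)) * (Aint ^ (1/2 : ℝ) * Aint ^ (1/2 : ℝ)) := by
        ring
    _ = Kc w * Aint := by
        rw [← ENNReal.rpow_add_of_nonneg _ _ (by norm_num) (by norm_num),
          ← ENNReal.rpow_add_of_nonneg _ _ (by norm_num) (by norm_num)]
        norm_num

lemma Kc_int : ∫⁻ w : ℝ, Kc w = Aint * Aint := by
  have hmeas : AEMeasurable (Function.uncurry fun w z : ℝ =>
      gk z ^ (4/3 : ℝ) * gk (w - z) ^ (4/3 : ℝ)) ((volume : Measure ℝ).prod volume) := by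
    apply Measurable.aemeasurable
    apply Measurable.mul
    · exact (ENNReal.continuous_rpow_const.measurable).comp (gk_meas.comp measurable_snd)
    · exact (ENNReal.continuous_rpow_const.measurable).comp
        (gk_meas.comp (measurable_fst.sub measurable_snd))
  calc ∫⁻ w : ℝ, Kc w
      = ∫⁻ w : ℝ, ∫⁻ z : ℝ, gk z ^ (4/3 : ℝ) * gk (w - z) ^ (4/3 : ℝ) := by
        refine lintegral_congr fun w => lintegral_congr fun z => ?_
        exact ENNReal.mul_rpow_of_nonneg _ _ (by norm_num)
    _ = ∫⁻ z : ℝ, ∫⁻ w : ℝ, gk z ^ (4/3 : ℝ) * gk (w - z) ^ (4/3 : ℝ) :=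
        lintegral_lintegral_swap hmeas
    _ = ∫⁻ z : ℝ, gk z ^ (4/3 : ℝ) * ∫⁻ w : ℝ, gk (w - z) ^ (4/3 : ℝ) := by
        refine lintegral_congr fun z => ?_
        exact lintegral_const_mul' _ _ (by
          exact (ENNReal.rpow_lt_top_of_nonneg (by norm_num) (gk_ne_top z)).ne)
    _ = ∫⁻ z : ℝ, gk z ^ (4/3 : ℝ) * Aint := by
        refine lintegral_congr fun z => ?_
        congr 1
        have := lintegral_shift (fun w => gk w ^ (4/3 : ℝ)) (-z)
        simpa [sub_eq_add_neg, Aint] using this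
    _ = Aint * Aint := by
        rw [lintegral_mul_const' _ _ Aint_ne_top]
        rfl

lemma Hc_meas : Measurable Hc := by
  apply Measurable.lintegral_prod_right
  exact gk_meas.comp measurable_snd |>.mul
    (gk_meas.comp (measurable_fst.sub measurable_snd))

lemma Hc_ne_top (w : ℝ) : Hc w ≠ ⊤ := by
  refine ((Hc_le w).trans_lt ?_).ne
  exact ENNReal.mul_lt_top
    (ENNReal.rpow_lt_top_of_nonneg (by norm_num) ((Kc_le w).trans_lt Aint_lt_top).ne)
    (ENNReal.rpow_lt_top_of_nonneg (by norm_num) Aint_ne_top)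

lemma conv_eq (x y : ℝ) : ∫⁻ z, gk (x - z) * gk (y - z) = Hc (y - x) := by
  have h := lintegral_shift (fun z => gk (x - z) * gk (y - z)) x
  rw [← h]
  refine lintegral_congr fun z => ?_
  rw [show x - (z + x) = -z by ring, gk_neg, show y - (z + x) = (y - x) - z by ring]

/-- The triple integral
`∫_{ℝ³} (1 ∧ |x|⁻¹)(1 ∧ |y|⁻¹)(1 ∧ |x-z|⁻¹)(1 ∧ |y-z|⁻¹) dx dy dz` is finite. -/
theorem triple_integral_finite :
    (∫⁻ x : ℝ, ∫⁻ y : ℝ, ∫⁻ z : ℝ,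
        ENNReal.ofReal
          (min 1 |x|⁻¹ * min 1 |y|⁻¹ * min 1 |x - z|⁻¹ * min 1 |y - z|⁻¹)) < ⊤ := by
  have hrw : ∀ x y z : ℝ,
      ENNReal.ofReal (min 1 |x|⁻¹ * min 1 |y|⁻¹ * min 1 |x - z|⁻¹ * min 1 |y - z|⁻¹)
        = gk x * gk y * gk (x - z) * gk (y - z) := by
    intro x y z
    have h1 : (0:ℝ) ≤ min 1 |x|⁻¹ := le_min zero_le_one (by positivity)
    have h2 : (0:ℝ) ≤ min 1 |y|⁻¹ := le_min zero_le_one (by positivity)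
    have h3 : (0:ℝ) ≤ min 1 |x - z|⁻¹ := le_min zero_le_one (by positivity)
    rw [ENNReal.ofReal_mul (by positivity), ENNReal.ofReal_mul (by positivity),
      ENNReal.ofReal_mul (by positivity)]
    rfl
  have step1 : ∀ x y : ℝ,
      (∫⁻ z : ℝ, gk x * gk y * gk (x - z) * gk (y - z)) = gk x * gk y * Hc (y - x) := by
    intro x y
    calc ∫⁻ z : ℝ, gk x * gk y * gk (x - z) * gk (y - z)
        = ∫⁻ z : ℝ, (gk x * gk y) * (gk (x - z) * gk (y - z)) := by
          refine lintegral_congr fun z => ?_; ring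
      _ = (gk x * gk y) * ∫⁻ z : ℝ, gk (x - z) * gk (y - z) :=
          lintegral_const_mul' _ _ (ENNReal.mul_ne_top (gk_ne_top x) (gk_ne_top y))
      _ = gk x * gk y * Hc (y - x) := by rw [conv_eq]
  have step2 : ∀ x : ℝ,
      (∫⁻ y : ℝ, gk x * gk y * Hc (y - x)) = ∫⁻ y : ℝ, gk x * gk (y + x) * Hc y := by
    intro x
    have h := lintegral_shift (fun y => gk x * gk y * Hc (y - x)) x
    rw [← h]
    refine lintegral_congr fun y => ?_
    rw [add_sub_cancel_right]
  have hswap :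
      (∫⁻ x : ℝ, ∫⁻ y : ℝ, gk x * gk (y + x) * Hc y)
        = ∫⁻ y : ℝ, ∫⁻ x : ℝ, gk x * gk (y + x) * Hc y := by
    refine lintegral_lintegral_swap (Measurable.aemeasurable ?_)
    exact ((gk_meas.comp measurable_fst).mul
      (gk_meas.comp (measurable_snd.add measurable_fst))).mul (Hc_meas.comp measurable_snd)
  have step3 : ∀ y : ℝ, (∫⁻ x : ℝ, gk x * gk (y + x) * Hc y) = Hc y * Hc y := by
    intro y
    calc ∫⁻ x : ℝ, gk x * gk (y + x) * Hc y
        = (∫⁻ x : ℝ, gk x * gk (y + x)) * Hc y := lintegral_mul_const' _ _ (Hc_ne_top y)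
      _ = Hc y * Hc y := by
          congr 1
          have h := lintegral_neg_arg (fun x => gk x * gk (y + x))
          rw [← h]
          refine (lintegral_congr fun x => ?_).symm
          rw [gk_neg, show y + -x = y - x by ring]
  calc (∫⁻ x : ℝ, ∫⁻ y : ℝ, ∫⁻ z : ℝ,
        ENNReal.ofReal
          (min 1 |x|⁻¹ * min 1 |y|⁻¹ * min 1 |x - z|⁻¹ * min 1 |y - z|⁻¹))
      = ∫⁻ x : ℝ, ∫⁻ y : ℝ, ∫⁻ z : ℝ, gk x * gk y * gk (x - z) * gk (y - z) := by
        refine lintegral_congr fun x => lintegral_congr fun y => lintegral_congr fun z => ?_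
        exact hrw x y z
    _ = ∫⁻ x : ℝ, ∫⁻ y : ℝ, gk x * gk (y + x) * Hc y := by
        refine lintegral_congr fun x => ?_
        rw [show (∫⁻ y : ℝ, ∫⁻ z : ℝ, gk x * gk y * gk (x - z) * gk (y - z))
            = ∫⁻ y : ℝ, gk x * gk y * Hc (y - x) from lintegral_congr fun y => step1 x y]
        exact step2 x
    _ = ∫⁻ y : ℝ, ∫⁻ x : ℝ, gk x * gk (y + x) * Hc y := hswap
    _ = ∫⁻ y : ℝ, Hc y * Hc y := lintegral_congr step3
    _ ≤ ∫⁻ y : ℝ, Kc y * Aint := lintegral_mono Hc_sq_le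
    _ = (∫⁻ y : ℝ, Kc y) * Aint := lintegral_mul_const' _ _ Aint_ne_top
    _ = Aint * Aint * Aint := by rw [Kc_int]
    _ < ⊤ := by
        exact ENNReal.mul_lt_top (ENNReal.mul_lt_top Aint_lt_top Aint_lt_top) Aint_lt_top
end
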